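/- arXiv:math/0312312 — 4 statements merged into one kernel-verified Lean document; each statement's English description precedes it below -/
import Mathlib

section
/- For every λ ∈ ℝ and every n ∈ ℕ, the coefficients β_n(λ) satisfy the three-term relation a_n β_{n+1}(λ) + a_{n−1} β_{n−1}(λ) + b_n β_n(λ) = λ β_n(λ), where β_{−1} := 0 and a_{−1} := 0. -/
noncomputable section
open scoped ENNReal
open Filter

/-- The `q`-Pochhammer symbol `(x; q)_n = ∏_{k=0}^{n-1} (1 - x qᵏ)`. -/
def qPoch (x q : ℝ) (n : ℕ) : ℝ := ∏ k ∈ Finset.range n, (1 - x * q ^ k)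

/-- The infinite `q`-Pochhammer symbol `(x; q)_∞ = ∏_{k=0}^{∞} (1 - x qᵏ)`. -/
def qPochInf (x q : ℝ) : ℝ := ∏' k : ℕ, (1 - x * q ^ k)

/-- The alternative `q`-Charlier polynomial
`K_n(x; a; q) = ∑_{k=0}^n (q^{-n};q)_k (-a qⁿ;q)_k / (q;q)_k · (q x)^k`. -/
def altCharlier (a q : ℝ) (n : ℕ) (x : ℝ) : ℝ :=
  ∑ k ∈ Finset.range (n + 1),
    qPoch ((q ^ n)⁻¹) q k * qPoch (-(a * q ^ n)) q k / qPoch q q k * (q * x) ^ k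

/-- Off-diagonal Jacobi matrix coefficient `a_n`. -/
def acoef (q a : ℝ) (n : ℕ) : ℝ :=
  -(Real.sqrt (a * q ^ (3 * n + 1)) *
      Real.sqrt ((1 - q ^ (n + 1)) * (1 + a * q ^ n))) /
    ((1 + a * q ^ (2 * n + 1)) *
      Real.sqrt ((1 + a * q ^ (2 * n)) * (1 + a * q ^ (2 * n + 2))))

/-- Diagonal Jacobi matrix coefficient `b_n`. -/
def bcoef (q a : ℝ) (n : ℕ) : ℝ :=
  q ^ n * ((1 + a * q ^ n) / ((1 + a * q ^ (2 * n)) * (1 + a * q ^ (2 * n + 1))) +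
    a * q ^ ((n : ℤ) - 1) * (1 - q ^ n) /
      ((1 + a * q ^ (2 * (n : ℤ) - 1)) * (1 + a * q ^ (2 * n))))

/-- `a_{n-1}` with the convention `a_{-1} = 0`. -/
def aprev (q a : ℝ) : ℕ → ℝ
  | 0 => 0
  | n + 1 => acoef q a n

/-- The coefficients `β_n(λ)` of the eigenvector `ξ_λ` of `I₁`. -/
def betaC (q a : ℝ) (n : ℕ) (lam : ℝ) : ℝ :=
  Real.sqrt (qPoch (-a) q n * (1 + a * q ^ (2 * n)) / (qPoch q q n * (1 + a) * a ^ n)) *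
    q ^ (-(((n : ℝ) * ((n : ℝ) + 1)) / 4)) * altCharlier a q n lam

namespace St3

lemma qPoch_succ (x q : ℝ) (n : ℕ) :
    qPoch x q (n + 1) = qPoch x q n * (1 - x * q ^ n) := Finset.prod_range_succ _ _

lemma qPoch_succ' (x q : ℝ) (n : ℕ) :
    qPoch x q (n + 1) = (1 - x) * qPoch (x * q) q n := by
  rw [qPoch, Finset.prod_range_succ', mul_comm]
  simp only [pow_zero, mul_one, qPoch]
  congr 1
  exact Finset.prod_congr rfl fun i _ => by ring

variable {q a : ℝ}

lemma pos_one_add (hq0 : 0 < q) (ha : 0 < a) (m : ℕ) : (0:ℝ) < 1 + a * q ^ m := by positivity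

lemma pos_one_sub (hq0 : 0 < q) (hq1 : q < 1) (m : ℕ) : (0:ℝ) < 1 - q ^ (m + 1) := by
  have h := pow_lt_one₀ hq0.le hq1 (Nat.succ_ne_zero m)
  simpa using h

lemma qPoch_q_pos (hq0 : 0 < q) (hq1 : q < 1) (k : ℕ) : 0 < qPoch q q k := by
  refine Finset.prod_pos fun i _ => ?_
  have h : q * q ^ i = q ^ (i+1) := by ring
  rw [h]; exact pos_one_sub hq0 hq1 i

lemma qPoch_neg_pos (hq0 : 0 < q) (ha : 0 < a) (m k : ℕ) :
    0 < qPoch (-(a * q ^ m)) q k := by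
  refine Finset.prod_pos fun i _ => ?_
  have : (0:ℝ) < a * q ^ m * q ^ i := by positivity
  linarith

/-- coefficient of the alternative q-Charlier polynomial -/
def cc (q a : ℝ) (n k : ℕ) : ℝ :=
  qPoch ((q ^ n)⁻¹) q k * qPoch (-(a * q ^ n)) q k / qPoch q q k

lemma altCharlier_eq (n : ℕ) (x : ℝ) :
    altCharlier a q n x = ∑ k ∈ Finset.range (n + 1), cc q a n k * (q * x) ^ k := rfl

lemma cc_eq_zero (hq0 : 0 < q) {n k : ℕ} (h : n < k) : cc q a n k = 0 := by
  have hqn : q ^ n ≠ 0 := pow_ne_zero _ (ne_of_gt hq0)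
  have hz : qPoch ((q ^ n)⁻¹) q k = 0 := by
    refine Finset.prod_eq_zero (Finset.mem_range.mpr h) ?_
    rw [inv_mul_cancel₀ hqn]; ring
  simp [cc, hz]

lemma cc_zero (n : ℕ) : cc q a n 0 = 1 := by simp [cc, qPoch]

def Ac (q a : ℝ) (n : ℕ) : ℝ :=
  q ^ n * (1 + a * q ^ n) / ((1 + a * q ^ (2*n)) * (1 + a * q ^ (2*n+1)))

def Cc (q a : ℝ) (m : ℕ) : ℝ :=
  a * q ^ (2*m+1) * (1 - q ^ (m+1)) / ((1 + a * q ^ (2*m+1)) * (1 + a * q ^ (2*m+2)))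


set_option maxHeartbeats 2000000 in
lemma key (hq0 : 0 < q) (hq1 : q < 1) (ha : 0 < a) (m j : ℕ) :
    q * (Ac q a (m+1) * (cc q a (m+1) (j+1) - cc q a (m+2) (j+1)) +
         Cc q a m * (cc q a (m+1) (j+1) - cc q a m (j+1))) = cc q a (m+1) j := by
  have hq : q ≠ 0 := ne_of_gt hq0
  have hp1 : (q:ℝ) ^ (m+1) ≠ 0 := pow_ne_zero _ hq
  have hp2 : (q:ℝ) ^ (m+2) ≠ 0 := pow_ne_zero _ hq
  have hR : qPoch q q j ≠ 0 := ne_of_gt (qPoch_q_pos hq0 hq1 j)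
  have hRj : (1:ℝ) - q * q ^ j ≠ 0 := by
    have h := pos_one_sub hq0 hq1 j
    have e : q ^ (j+1) = q * q ^ j := by ring
    rw [e] at h; linarith
  have h1a : (1:ℝ) + a * q ^ (m+1) ≠ 0 := ne_of_gt (pos_one_add hq0 ha _)
  have h1am : (1:ℝ) + a * q ^ m ≠ 0 := ne_of_gt (pos_one_add hq0 ha _)
  have hinv : (1:ℝ) - (q ^ (m+1))⁻¹ ≠ 0 := by
    have h1 : (q ^ (m+1))⁻¹ ≠ 1 := fun h =>
      absurd (inv_eq_one.mp h) (ne_of_lt (pow_lt_one₀ hq0.le hq1 (Nat.succ_ne_zero m)))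
    exact sub_ne_zero.mpr (Ne.symm h1)
  have hd1 : (1:ℝ) + a * q ^ (2*(m+1)) ≠ 0 := ne_of_gt (pos_one_add hq0 ha _)
  have hd2 : (1:ℝ) + a * q ^ (2*(m+1)+1) ≠ 0 := ne_of_gt (pos_one_add hq0 ha _)
  have hd3 : (1:ℝ) + a * q ^ (2*m+1) ≠ 0 := ne_of_gt (pos_one_add hq0 ha _)
  have hd4 : (1:ℝ) + a * q ^ (2*m+2) ≠ 0 := ne_of_gt (pos_one_add hq0 ha _)
  -- expansion of cc (m+1) (j+1)
  have e1 : cc q a (m+1) (j+1) =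
      qPoch ((q^(m+1))⁻¹) q j * (1 - (q^(m+1))⁻¹ * q ^ j) *
        (qPoch (-(a * q^(m+1))) q j * (1 + a * q^(m+1) * q ^ j)) /
        (qPoch q q j * (1 - q * q ^ j)) := by
    simp only [cc]
    rw [qPoch_succ, qPoch_succ, qPoch_succ]
    ring
  -- expansion of cc (m+2) (j+1)
  have hfac : qPoch ((q^(m+2))⁻¹) q (j+1) = (1 - (q^(m+2))⁻¹) * qPoch ((q^(m+1))⁻¹) q j := by
    have hx : (q^(m+2))⁻¹ * q = (q^(m+1))⁻¹ := by
      rw [pow_succ, mul_inv, mul_assoc, inv_mul_cancel₀ hq, mul_one]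
    rw [qPoch_succ', hx]
  have h2 := qPoch_succ' (-(a * q^(m+1))) q (j+1)
  rw [show -(a * q^(m+1)) * q = -(a * q^(m+2)) by ring] at h2
  rw [qPoch_succ (-(a * q^(m+1))) q (j+1), qPoch_succ (-(a * q^(m+1))) q j] at h2
  have hT : qPoch (-(a*q^(m+2))) q (j+1) =
      qPoch (-(a*q^(m+1))) q j * (1 + a*q^(m+1)*q^j) * (1 + a*q^(m+1)*q^(j+1))
        / (1 + a*q^(m+1)) := by
    rw [eq_div_iff h1a]
    linear_combination -h2
  have e2 : cc q a (m+2) (j+1) =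
      (1 - (q^(m+2))⁻¹) * qPoch ((q^(m+1))⁻¹) q j *
        (qPoch (-(a * q^(m+1))) q j * (1 + a * q^(m+1) * q ^ j) * (1 + a * q^(m+1) * q ^ (j+1))
          / (1 + a * q^(m+1))) /
        (qPoch q q j * (1 - q * q ^ j)) := by
    simp only [cc]
    rw [hfac, hT, qPoch_succ q q j]
    try ring
  -- expansion of cc m (j+1)
  have h3 := qPoch_succ' ((q^(m+1))⁻¹) q (j+1)
  rw [show (q^(m+1))⁻¹ * q = (q^m)⁻¹ by
    rw [pow_succ, mul_inv, mul_assoc, inv_mul_cancel₀ hq, mul_one]] at h3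
  rw [qPoch_succ ((q^(m+1))⁻¹) q (j+1), qPoch_succ ((q^(m+1))⁻¹) q j] at h3
  have hm1 : q^(m+1) * (q^(m+1) - 1) ≠ 0 := by
    refine mul_ne_zero hp1 ?_
    have := pow_lt_one₀ hq0.le hq1 (Nat.succ_ne_zero m)
    intro h; simp at this; nlinarith [this]
  have hT2a : qPoch ((q^m)⁻¹) q (j+1) =
      qPoch ((q^(m+1))⁻¹) q j * (1 - (q^(m+1))⁻¹ * q^j) * (1 - (q^(m+1))⁻¹ * q^(j+1))
        / (1 - (q^(m+1))⁻¹) := by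
    rw [eq_div_iff hinv]
    linear_combination -h3
  have hT2 : qPoch ((q^m)⁻¹) q (j+1) =
      qPoch ((q^(m+1))⁻¹) q j * ((q^(m+1) - q^j) * (q^(m+1) - q^(j+1)))
        / (q^(m+1) * (q^(m+1) - 1)) := by
    rw [hT2a, div_eq_div_iff hinv hm1]
    field_simp
  have hT3 : qPoch (-(a*q^m)) q (j+1) = (1 + a*q^m) * qPoch (-(a*q^(m+1))) q j := by
    rw [qPoch_succ', show -(a*q^m) * q = -(a*q^(m+1)) by ring]
    ring
  have e3 : cc q a m (j+1) =
      qPoch ((q^(m+1))⁻¹) q j * ((q^(m+1) - q^j) * (q^(m+1) - q^(j+1)))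
        / (q^(m+1) * (q^(m+1) - 1)) *
      ((1 + a * q^m) * qPoch (-(a * q^(m+1))) q j) /
        (qPoch q q j * (1 - q * q ^ j)) := by
    simp only [cc]
    rw [hT2, hT3, qPoch_succ q q j]
    try ring
  rw [e1, e2, e3]
  simp only [Ac, Cc, cc]
  generalize qPoch ((q^(m+1))⁻¹) q j = P at *
  generalize qPoch (-(a * q^(m+1))) q j = Q at *
  have hm3 : q ^ (m+1) - 1 ≠ 0 := right_ne_zero_of_mul hm1
  field_simp [hq, hm3, hp1, hp2, hR, hRj, h1a, h1am, hd1, hd2, hd3, hd4, hm1]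
  ring

lemma rec_sum (hq0 : 0 < q) (hq1 : q < 1) (ha : 0 < a) (m : ℕ) (lam : ℝ) :
    ∑ k ∈ Finset.range (m+2+1),
      (Ac q a (m+1) * (cc q a (m+1) k - cc q a (m+2) k) +
        Cc q a m * (cc q a (m+1) k - cc q a m k)) * (q*lam)^k
    = lam * ∑ k ∈ Finset.range (m+2+1), cc q a (m+1) k * (q*lam)^k := by
  rw [Finset.sum_range_succ'
    (f := fun k => (Ac q a (m+1) * (cc q a (m+1) k - cc q a (m+2) k) +
        Cc q a m * (cc q a (m+1) k - cc q a m k)) * (q*lam)^k) (m+2)]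
  rw [Finset.sum_range_succ (f := fun k => cc q a (m+1) k * (q*lam)^k) (m+2)]
  rw [cc_eq_zero hq0 (show m+1 < m+2 by omega)]
  simp only [cc_zero, pow_zero, mul_one, sub_self, mul_zero, zero_mul, add_zero]
  rw [Finset.mul_sum]
  refine Finset.sum_congr rfl fun k _ => ?_
  have hk := key hq0 hq1 ha m k
  linear_combination (lam * (q*lam)^k) * hk

lemma rec_poly (hq0 : 0 < q) (hq1 : q < 1) (ha : 0 < a) (m : ℕ) (lam : ℝ) :
    Ac q a (m+1) * (altCharlier a q (m+1) lam - altCharlier a q (m+2) lam) +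
      Cc q a m * (altCharlier a q (m+1) lam - altCharlier a q m lam)
      = lam * altCharlier a q (m+1) lam := by
  have hz1 : cc q a (m+1) (m+2) = 0 := cc_eq_zero hq0 (by omega)
  have hz2 : cc q a m (m+1) = 0 := cc_eq_zero hq0 (by omega)
  have hz3 : cc q a m (m+2) = 0 := cc_eq_zero hq0 (by omega)
  rw [altCharlier_eq, altCharlier_eq, altCharlier_eq]
  have e1 : ∑ k ∈ Finset.range (m+1+1), cc q a (m+1) k * (q*lam)^k
      = ∑ k ∈ Finset.range (m+2+1), cc q a (m+1) k * (q*lam)^k := by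
    rw [Finset.sum_range_succ (f := fun k => cc q a (m+1) k * (q*lam)^k) (m+2), hz1]
    simp
  have e2 : ∑ k ∈ Finset.range (m+1), cc q a m k * (q*lam)^k
      = ∑ k ∈ Finset.range (m+2+1), cc q a m k * (q*lam)^k := by
    rw [Finset.sum_range_succ (f := fun k => cc q a m k * (q*lam)^k) (m+2),
        Finset.sum_range_succ (f := fun k => cc q a m k * (q*lam)^k) (m+1), hz2, hz3]
    simp
  rw [e1, e2]
  have hsum := rec_sum hq0 hq1 ha m lam
  rw [← hsum, ← Finset.sum_sub_distrib, ← Finset.sum_sub_distrib, Finset.mul_sum,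
    Finset.mul_sum, ← Finset.sum_add_distrib]
  exact Finset.sum_congr rfl fun k _ => by ring

lemma rec0 (hq0 : 0 < q) (hq1 : q < 1) (ha : 0 < a) (lam : ℝ) :
    Ac q a 0 * (altCharlier a q 0 lam - altCharlier a q 1 lam)
      = lam * altCharlier a q 0 lam := by
  have hq : q ≠ 0 := ne_of_gt hq0
  have h1 : (1:ℝ) - q ≠ 0 := ne_of_gt (by linarith)
  have h1a : (1:ℝ) + a ≠ 0 := ne_of_gt (by positivity)
  have h2 : (1:ℝ) + a * q ≠ 0 := ne_of_gt (by positivity)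
  simp only [altCharlier, Ac, qPoch, Finset.sum_range_succ, Finset.sum_range_zero,
    Finset.prod_range_succ, Finset.prod_range_zero, pow_zero, pow_one]
  field_simp
  ring

/-- the normalization factor -/
def rrr (q a : ℝ) (n : ℕ) : ℝ :=
  qPoch (-a) q n * (1 + a * q ^ (2 * n)) / (qPoch q q n * (1 + a) * a ^ n)

def TTT (q a : ℝ) (n : ℕ) : ℝ :=
  Real.sqrt (rrr q a n) * q ^ (-(((n : ℝ) * ((n : ℝ) + 1)) / 4))

lemma qPoch_negA_pos (hq0 : 0 < q) (ha : 0 < a) (k : ℕ) : 0 < qPoch (-a) q k := by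
  refine Finset.prod_pos fun i _ => ?_
  have : (0:ℝ) < a * q ^ i := by positivity
  nlinarith

lemma rrr_pos (hq0 : 0 < q) (hq1 : q < 1) (ha : 0 < a) (n : ℕ) : 0 < rrr q a n := by
  refine div_pos (mul_pos (qPoch_negA_pos hq0 ha n) (pos_one_add hq0 ha _)) ?_
  have h := qPoch_q_pos hq0 hq1 n
  positivity

lemma TTT_pos (hq0 : 0 < q) (hq1 : q < 1) (ha : 0 < a) (n : ℕ) : 0 < TTT q a n :=
  mul_pos (Real.sqrt_pos.mpr (rrr_pos hq0 hq1 ha n)) (Real.rpow_pos_of_pos hq0 _)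

lemma rr_succ (hq0 : 0 < q) (hq1 : q < 1) (ha : 0 < a) (n : ℕ) :
    rrr q a (n+1) = rrr q a n * ((1 + a * q ^ n) * (1 + a * q ^ (2*n+2)))
      / ((1 - q ^ (n+1)) * (1 + a * q ^ (2*n)) * a) := by
  have hq : q ≠ 0 := ne_of_gt hq0
  have ha' : a ≠ 0 := ne_of_gt ha
  have hG : qPoch q q n ≠ 0 := ne_of_gt (qPoch_q_pos hq0 hq1 n)
  have hG1 : (1:ℝ) - q * q ^ n ≠ 0 := by
    have h := pos_one_sub hq0 hq1 n
    have e : q ^ (n+1) = q * q ^ n := by ring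
    rw [e] at h; exact ne_of_gt h
  have h1a : (1:ℝ) + a ≠ 0 := ne_of_gt (by positivity)
  have hs : (1:ℝ) - q ^ (n+1) ≠ 0 := ne_of_gt (pos_one_sub hq0 hq1 n)
  have hd : (1:ℝ) + a * q ^ (2*n) ≠ 0 := ne_of_gt (pos_one_add hq0 ha _)
  simp only [rrr]
  rw [qPoch_succ (-a) q n, qPoch_succ q q n]
  rw [show q * q ^ n = q ^ (n+1) by ring]
  field_simp
  ring

lemma eq_of_sq_of_nonpos {x y : ℝ} (hx : x ≤ 0) (hy : y ≤ 0) (h : x^2 = y^2) : x = y := by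
  have h2 : (x - y) * (x + y) = 0 := by linear_combination h
  rcases mul_eq_zero.mp h2 with h3 | h3
  · linarith [sub_eq_zero.mp h3]
  · have hx' : x = -y := by linarith
    have : x = 0 := by nlinarith
    have : y = 0 := by nlinarith
    linarith

lemma acoef_nonpos (hq0 : 0 < q) (hq1 : q < 1) (ha : 0 < a) (n : ℕ) : acoef q a n ≤ 0 := by
  unfold acoef
  apply div_nonpos_of_nonpos_of_nonneg
  · exact neg_nonpos.mpr (mul_nonneg (Real.sqrt_nonneg _) (Real.sqrt_nonneg _))
  · exact mul_nonneg (le_of_lt (pos_one_add hq0 ha _)) (Real.sqrt_nonneg _)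

lemma acoef_sq (hq0 : 0 < q) (hq1 : q < 1) (ha : 0 < a) (n : ℕ) :
    acoef q a n ^ 2 = (a * q ^ (3*n+1) * ((1 - q ^ (n+1)) * (1 + a * q ^ n)))
      / ((1 + a * q ^ (2*n+1))^2 * ((1 + a * q ^ (2*n)) * (1 + a * q ^ (2*n+2)))) := by
  have h1 : (0:ℝ) ≤ a * q ^ (3*n+1) := by positivity
  have h2 : (0:ℝ) ≤ (1 - q ^ (n+1)) * (1 + a * q ^ n) :=
    mul_nonneg (le_of_lt (pos_one_sub hq0 hq1 n)) (le_of_lt (pos_one_add hq0 ha _))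
  have h3 : (0:ℝ) ≤ (1 + a * q ^ (2*n)) * (1 + a * q ^ (2*n+2)) :=
    mul_nonneg (le_of_lt (pos_one_add hq0 ha _)) (le_of_lt (pos_one_add hq0 ha _))
  unfold acoef
  rw [div_pow, neg_pow, mul_pow, mul_pow, Real.sq_sqrt h1, Real.sq_sqrt h2, Real.sq_sqrt h3]
  ring

lemma TT_sq (hq0 : 0 < q) (hq1 : q < 1) (ha : 0 < a) (n : ℕ) :
    TTT q a n ^ 2 = rrr q a n * q ^ ((-(((n : ℝ) * ((n : ℝ) + 1)) / 4)) * 2) := by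
  unfold TTT
  rw [mul_pow, Real.sq_sqrt (le_of_lt (rrr_pos hq0 hq1 ha n)),
    ← Real.rpow_natCast (q ^ (-(((n : ℝ) * ((n : ℝ) + 1)) / 4))) 2,
    ← Real.rpow_mul hq0.le]
  norm_num

lemma sqA (hq0 : 0 < q) (hq1 : q < 1) (ha : 0 < a) (n : ℕ) :
    acoef q a n * TTT q a (n+1) = -(Ac q a n * TTT q a n) := by
  have hq : q ≠ 0 := ne_of_gt hq0
  have ha' : a ≠ 0 := ne_of_gt ha
  apply eq_of_sq_of_nonpos
  · exact mul_nonpos_iff.mpr (Or.inr ⟨acoef_nonpos hq0 hq1 ha n, (TTT_pos hq0 hq1 ha _).le⟩)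
  · refine neg_nonpos.mpr (mul_nonneg ?_ (TTT_pos hq0 hq1 ha _).le)
    unfold Ac
    have h1 := pos_one_add hq0 ha (2*n)
    have h2 := pos_one_add hq0 ha (2*n+1)
    positivity
  · rw [neg_sq, mul_pow, mul_pow, acoef_sq hq0 hq1 ha n, TT_sq hq0 hq1 ha (n+1),
      TT_sq hq0 hq1 ha n, rr_succ hq0 hq1 ha n]
    have hE : q ^ ((-(((n+1:ℕ) : ℝ) * (((n+1:ℕ) : ℝ) + 1) / 4)) * 2)
        = q ^ ((-((n : ℝ) * ((n : ℝ) + 1) / 4)) * 2) * (q ^ (n+1))⁻¹ := by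
      rw [← Real.rpow_natCast q (n+1), ← Real.rpow_neg hq0.le, ← Real.rpow_add hq0]
      congr 1
      push_cast
      ring
    rw [hE]
    have hs : (1:ℝ) - q ^ (n+1) ≠ 0 := ne_of_gt (pos_one_sub hq0 hq1 n)
    have hd0 : (1:ℝ) + a * q ^ (2*n) ≠ 0 := ne_of_gt (pos_one_add hq0 ha _)
    have hd1 : (1:ℝ) + a * q ^ (2*n+1) ≠ 0 := ne_of_gt (pos_one_add hq0 ha _)
    have hd2 : (1:ℝ) + a * q ^ (2*n+2) ≠ 0 := ne_of_gt (pos_one_add hq0 ha _)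
    unfold Ac
    field_simp
    ring

lemma sqC (hq0 : 0 < q) (hq1 : q < 1) (ha : 0 < a) (m : ℕ) :
    acoef q a m * TTT q a m = -(Cc q a m * TTT q a (m+1)) := by
  have hq : q ≠ 0 := ne_of_gt hq0
  have ha' : a ≠ 0 := ne_of_gt ha
  apply eq_of_sq_of_nonpos
  · exact mul_nonpos_iff.mpr (Or.inr ⟨acoef_nonpos hq0 hq1 ha m, (TTT_pos hq0 hq1 ha _).le⟩)
  · refine neg_nonpos.mpr (mul_nonneg ?_ (TTT_pos hq0 hq1 ha _).le)
    unfold Cc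
    have h1 := pos_one_add hq0 ha (2*m+1)
    have h2 := pos_one_add hq0 ha (2*m+2)
    have h3 := pos_one_sub hq0 hq1 m
    positivity
  · rw [neg_sq, mul_pow, mul_pow, acoef_sq hq0 hq1 ha m, TT_sq hq0 hq1 ha m,
      TT_sq hq0 hq1 ha (m+1), rr_succ hq0 hq1 ha m]
    have hE : q ^ ((-(((m+1:ℕ) : ℝ) * (((m+1:ℕ) : ℝ) + 1) / 4)) * 2)
        = q ^ ((-((m : ℝ) * ((m : ℝ) + 1) / 4)) * 2) * (q ^ (m+1))⁻¹ := by
      rw [← Real.rpow_natCast q (m+1), ← Real.rpow_neg hq0.le, ← Real.rpow_add hq0]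
      congr 1
      push_cast
      ring
    rw [hE]
    have hs : (1:ℝ) - q ^ (m+1) ≠ 0 := ne_of_gt (pos_one_sub hq0 hq1 m)
    have hd0 : (1:ℝ) + a * q ^ (2*m) ≠ 0 := ne_of_gt (pos_one_add hq0 ha _)
    have hd1 : (1:ℝ) + a * q ^ (2*m+1) ≠ 0 := ne_of_gt (pos_one_add hq0 ha _)
    have hd2 : (1:ℝ) + a * q ^ (2*m+2) ≠ 0 := ne_of_gt (pos_one_add hq0 ha _)
    unfold Cc
    field_simp
    ring

lemma bcoef_succ (hq0 : 0 < q) (hq1 : q < 1) (ha : 0 < a) (m : ℕ) :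
    bcoef q a (m+1) = Ac q a (m+1) + Cc q a m := by
  have hq : q ≠ 0 := ne_of_gt hq0
  have hd1 : (1:ℝ) + a * q ^ (2*(m+1)) ≠ 0 := ne_of_gt (pos_one_add hq0 ha _)
  have hd2 : (1:ℝ) + a * q ^ (2*(m+1)+1) ≠ 0 := ne_of_gt (pos_one_add hq0 ha _)
  have hd3 : (1:ℝ) + a * q ^ (2*m+1) ≠ 0 := ne_of_gt (pos_one_add hq0 ha _)
  have hd4 : (1:ℝ) + a * q ^ (2*m+2) ≠ 0 := ne_of_gt (pos_one_add hq0 ha _)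
  unfold bcoef Ac Cc
  have h1 : ((m+1 : ℕ) : ℤ) - 1 = ((m : ℕ) : ℤ) := by push_cast; ring
  have h2 : 2 * ((m+1 : ℕ) : ℤ) - 1 = ((2*m+1 : ℕ) : ℤ) := by push_cast; ring
  rw [h1, h2, zpow_natCast, zpow_natCast]
  field_simp
  ring

lemma bcoef_zero' (hq0 : 0 < q) (hq1 : q < 1) (ha : 0 < a) :
    bcoef q a 0 = Ac q a 0 := by
  unfold bcoef Ac
  norm_num

lemma betaC_eq (n : ℕ) (lam : ℝ) :
    betaC q a n lam = TTT q a n * altCharlier a q n lam := rfl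

end St3

/-- The coefficients `β_n(λ)` satisfy the three-term relation
`a_n β_{n+1}(λ) + a_{n-1} β_{n-1}(λ) + b_n β_n(λ) = λ β_n(λ)`,
with the conventions `a_{-1} := 0` and `β_{-1} := 0`. -/
theorem statement3 (q a : ℝ) (hq0 : 0 < q) (hq1 : q < 1) (ha : 0 < a)
    (lam : ℝ) (n : ℕ) :
    acoef q a n * betaC q a (n + 1) lam +
        aprev q a n * (if n = 0 then 0 else betaC q a (n - 1) lam) +
        bcoef q a n * betaC q a n lam = lam * betaC q a n lam := by
  open St3 in
  cases n with
  | zero =>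
      simp only [aprev, if_pos]
      rw [St3.betaC_eq, St3.betaC_eq, St3.bcoef_zero' hq0 hq1 ha]
      have hA := St3.sqA hq0 hq1 ha 0
      have h0 := St3.rec0 hq0 hq1 ha lam
      linear_combination (altCharlier a q 1 lam) * hA + (St3.TTT q a 0) * h0
  | succ m =>
      rw [if_neg (Nat.succ_ne_zero m)]
      simp only [aprev, Nat.add_sub_cancel]
      rw [St3.betaC_eq, St3.betaC_eq, St3.betaC_eq, St3.bcoef_succ hq0 hq1 ha m]
      have hA := St3.sqA hq0 hq1 ha (m+1)
      have hC := St3.sqC hq0 hq1 ha m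
      have hrec := St3.rec_poly hq0 hq1 ha m lam
      linear_combination (altCharlier a q (m+2) lam) * hA + (altCharlier a q m lam) * hC +
        (St3.TTT q a (m+1)) * hrec
end
end

section
/- For all m, n ∈ ℕ, the transformation formula F_n(q^{−m};a|q) = (−a)^m q^{m²} d_n(μ(m);a;q) holds, i.e. ∑_{k=0}^{m} [(q^{−m};q)_k (−a q^m;q)_k / (q;q)_k] q^{(n+1)k} = (−a)^m q^{m²} ∑_{k=0}^{min(m,n)} [(q^{−m};q)_k (−a q^m;q)_k (q^{−n};q)_k / (q;q)_k] q^{−k(k−1)} (−qⁿ/a)^k. -/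
noncomputable section
open scoped ENNReal
open Filter

/-- The dual functions `F_n(q^{-m}; a | q) = ₂φ₁(q^{-m}, -a q^m; 0; q, q^{n+1})`. -/
def Fdual (q a : ℝ) (n m : ℕ) : ℝ :=
  ∑ k ∈ Finset.range (m + 1),
    qPoch ((q ^ m)⁻¹) q k * qPoch (-(a * q ^ m)) q k / qPoch q q k * q ^ ((n + 1) * k)

/-- The dual alternative `q`-Charlier polynomial values
`d_n(μ(m); a; q) = ₃φ₀(q^{-m}, -a q^m, q^{-n}; —; q, -qⁿ/a)`, where `μ(m) = q^{-m} - a q^m`. -/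
def ddual (q a : ℝ) (n m : ℕ) : ℝ :=
  ∑ k ∈ Finset.range (min m n + 1),
    qPoch ((q ^ m)⁻¹) q k * qPoch (-(a * q ^ m)) q k * qPoch ((q ^ n)⁻¹) q k / qPoch q q k *
      (q ^ (k * (k - 1)))⁻¹ * (-(q ^ n / a)) ^ k

namespace Stmt11

lemma qPoch_zero (x q : ℝ) : qPoch x q 0 = 1 := by simp [qPoch]

lemma qPoch_succ (x q : ℝ) (n : ℕ) : qPoch x q (n+1) = qPoch x q n * (1 - x * q ^ n) :=
  Finset.prod_range_succ _ _

lemma qPoch_succ' (x q : ℝ) (n : ℕ) : qPoch x q (n+1) = (1 - x) * qPoch (x*q) q n := by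
  rw [qPoch, Finset.prod_range_succ', qPoch]
  rw [mul_comm]
  congr 1
  · simp
  · apply Finset.prod_congr rfl
    intro i _
    ring

lemma one_sub_q_pow_pos {q : ℝ} (hq0 : 0 < q) (hq1 : q < 1) (k : ℕ) : 0 < 1 - q^(k+1) := by
  have : q^(k+1) < 1 := pow_lt_one₀ hq0.le hq1 (by omega)
  linarith

lemma qPochq_pos {q : ℝ} (hq0 : 0 < q) (hq1 : q < 1) (k : ℕ) : 0 < qPoch q q k := by
  apply Finset.prod_pos
  intro i _
  have : q * q ^ i = q ^ (i+1) := (pow_succ' q i).symm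
  rw [this]
  exact one_sub_q_pow_pos hq0 hq1 i

lemma qPochq_ne {q : ℝ} (hq0 : 0 < q) (hq1 : q < 1) (k : ℕ) : qPoch q q k ≠ 0 :=
  ne_of_gt (qPochq_pos hq0 hq1 k)

lemma qPochq_succ (q : ℝ) (k : ℕ) : qPoch q q (k+1) = qPoch q q k * (1 - q^(k+1)) := by
  rw [qPoch_succ]
  congr 2
  exact (pow_succ' q k).symm

lemma qPoch_self_zero {q : ℝ} (hq : q ≠ 0) (m k : ℕ) (h : m < k) :
    qPoch ((q^m)⁻¹) q k = 0 := by
  apply Finset.prod_eq_zero (Finset.mem_range.2 h)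
  rw [inv_mul_cancel₀ (pow_ne_zero _ hq)]
  ring

end Stmt11

namespace Stmt11

/-- `E q a m k = (q^{-m};q)_k (-a q^m;q)_k / (q;q)_k`. -/
def E (q a : ℝ) (m k : ℕ) : ℝ :=
  qPoch ((q^m)⁻¹) q k * qPoch (-(a*q^m)) q k / qPoch q q k

lemma E_zero (q a : ℝ) (m : ℕ) : E q a m 0 = 1 := by simp [E, qPoch_zero]

lemma E_succ {q : ℝ} (hq0 : 0 < q) (hq1 : q < 1) (a : ℝ) (m k : ℕ) :
    E q a (m+1) (k+1) * (1 - q^(k+1)) =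
      (1 - (q^(m+1))⁻¹) * (1 + a*q^(m+1)) * E q (a*q^2) m k := by
  have hq : q ≠ 0 := ne_of_gt hq0
  have h1 : (q^(m+1))⁻¹ * q = (q^m)⁻¹ := by
    rw [pow_succ, mul_inv, mul_assoc, inv_mul_cancel₀ hq, mul_one]
  have h2 : -(a*q^(m+1)) * q = -(a*q^2*q^m) := by ring
  rw [E, E, qPoch_succ', qPoch_succ', qPochq_succ, h1, h2]
  have hZ := qPochq_ne hq0 hq1 k
  have hne : (1 : ℝ) - q^(k+1) ≠ 0 := ne_of_gt (one_sub_q_pow_pos hq0 hq1 k)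
  field_simp
  ring

/-- `W q n k = ∏_{j<k} (q^j - q^n)`. -/
def W (q : ℝ) (n k : ℕ) : ℝ := ∏ j ∈ Finset.range k, (q^j - q^n)

lemma W_zero (q : ℝ) (n : ℕ) : W q n 0 = 1 := by simp [W]

lemma W_succ (q : ℝ) (n k : ℕ) : W q n (k+1) = W q n k * (q^k - q^n) :=
  Finset.prod_range_succ _ _

lemma W_shift (q : ℝ) (n k : ℕ) : W q (n+1) (k+1) = q^k * W q n k * (1 - q^(n+1)) := by
  rw [W, Finset.prod_range_succ']
  have : ∀ i ∈ Finset.range k, q^(i+1) - q^(n+1) = q * (q^i - q^n) := by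
    intro i _; ring
  rw [Finset.prod_congr rfl this, Finset.prod_mul_distrib, Finset.prod_const,
    Finset.card_range, W]
  ring

lemma W_diff (q : ℝ) (n k : ℕ) :
    W q n (k+1) - W q (n+1) (k+1) = -q^n * (1 - q^(k+1)) * W q n k := by
  rw [W_succ, W_shift]
  ring

lemma W_eq_zero {q : ℝ} (n k : ℕ) (h : n < k) : W q n k = 0 := by
  apply Finset.prod_eq_zero (Finset.mem_range.2 h)
  ring

lemma poch_n_mul {q : ℝ} (hq : q ≠ 0) (n k : ℕ) :
    qPoch ((q^n)⁻¹) q k * (-q^n)^k = W q n k := by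
  have hc : (-q^n : ℝ)^k = ∏ _j ∈ Finset.range k, (-q^n) := by simp
  rw [qPoch, W, hc, ← Finset.prod_mul_distrib]
  apply Finset.prod_congr rfl
  intro j _
  have h : (q^n)⁻¹ * q^n = 1 := inv_mul_cancel₀ (pow_ne_zero _ hq)
  field_simp
  ring

end Stmt11

namespace Stmt11

def D (q a : ℝ) (n m : ℕ) : ℝ :=
  ∑ k ∈ Finset.range (m+1), E q a m k * (a⁻¹)^k * (q^(k*(k-1)))⁻¹ * W q n k

lemma Fdual_eq (q a : ℝ) (n m : ℕ) :
    Fdual q a n m = ∑ k ∈ Finset.range (m+1), E q a m k * q^((n+1)*k) := rfl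

lemma FrecA {q : ℝ} (hq0 : 0 < q) (hq1 : q < 1) (a : ℝ) (n m : ℕ) :
    Fdual q a (n+1) (m+1) = Fdual q a n (m+1) -
      (1 - (q^(m+1))⁻¹) * (1 + a*q^(m+1)) * q^(n+1) * Fdual q (a*q^2) n m := by
  have key : Fdual q a n (m+1) - Fdual q a (n+1) (m+1)
      = ∑ k ∈ Finset.range (m+2), E q a (m+1) k * (q^((n+1)*k) * (1 - q^k)) := by
    rw [Fdual_eq, Fdual_eq, ← Finset.sum_sub_distrib]
    apply Finset.sum_congr rfl
    intro k _
    have h : q^((n+1+1)*k) = q^((n+1)*k) * q^k := by rw [← pow_add]; congr 1; ring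
    rw [h]; ring
  rw [Finset.sum_range_succ'] at key
  simp only [Nat.mul_zero, pow_zero, sub_self, mul_zero, add_zero] at key
  have h2 : ∑ k ∈ Finset.range (m+1),
      E q a (m+1) (k+1) * (q^((n+1)*(k+1)) * (1 - q^(k+1)))
      = (1 - (q^(m+1))⁻¹) * (1 + a*q^(m+1)) * q^(n+1) * Fdual q (a*q^2) n m := by
    rw [Fdual_eq, Finset.mul_sum]
    apply Finset.sum_congr rfl
    intro k _
    have hE := E_succ hq0 hq1 a m k
    have hp : q^((n+1)*(k+1)) = q^(n+1) * q^((n+1)*k) := by rw [← pow_add]; congr 1; ring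
    rw [hp]
    linear_combination (q^(n+1) * q^((n+1)*k)) * hE
  rw [h2] at key
  linarith

lemma ddual_eq_D {q : ℝ} (hq0 : 0 < q) (a : ℝ) (n m : ℕ) :
    ddual q a n m = D q a n m := by
  have hq : q ≠ 0 := ne_of_gt hq0
  have hsub : Finset.range (min m n + 1) ⊆ Finset.range (m+1) :=
    Finset.range_subset_range.2 (by omega)
  rw [ddual, D]
  refine (Finset.sum_subset hsub ?_).trans (Finset.sum_congr rfl ?_)
  · intro k hk hk2
    have hn : n < k := by
      simp only [Finset.mem_range] at hk hk2
      omega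
    rw [qPoch_self_zero hq n k hn]
    ring
  · intro k _
    have hP : (-(q^n/a) : ℝ)^k = (-q^n)^k * (a⁻¹)^k := by
      rw [← mul_pow]; congr 1; rw [div_eq_mul_inv]; ring
    rw [hP, ← poch_n_mul hq n k, E]
    ring

lemma DrecB {q : ℝ} (hq0 : 0 < q) (hq1 : q < 1) {a : ℝ} (ha : a ≠ 0) (n m : ℕ) :
    D q a (n+1) (m+1) = D q a n (m+1) +
      (1 - (q^(m+1))⁻¹) * (1 + a*q^(m+1)) * (q^n/a) * D q (a*q^2) n m := by
  have hq : q ≠ 0 := ne_of_gt hq0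
  have key : D q a n (m+1) - D q a (n+1) (m+1)
      = ∑ k ∈ Finset.range (m+2),
          E q a (m+1) k * (a⁻¹)^k * (q^(k*(k-1)))⁻¹ * (W q n k - W q (n+1) k) := by
    rw [D, D, ← Finset.sum_sub_distrib]
    exact Finset.sum_congr rfl (fun k _ => by ring)
  rw [Finset.sum_range_succ'] at key
  simp only [W_zero, sub_self, mul_zero, add_zero] at key
  have h2 : ∑ k ∈ Finset.range (m+1),
      E q a (m+1) (k+1) * (a⁻¹)^(k+1) * (q^((k+1)*((k+1)-1)))⁻¹ *
        (W q n (k+1) - W q (n+1) (k+1))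
      = -((1 - (q^(m+1))⁻¹) * (1 + a*q^(m+1)) * (q^n/a) * D q (a*q^2) n m) := by
    rw [D, Finset.mul_sum, ← Finset.sum_neg_distrib]
    apply Finset.sum_congr rfl
    intro k _
    have hE := E_succ hq0 hq1 a m k
    have hexp : q^((k+1)*((k+1)-1)) = q^(k*(k-1)) * (q^2)^k := by
      rw [← pow_mul, ← pow_add]
      congr 1
      cases k with
      | zero => rfl
      | succ k => simp [Nat.succ_sub_one]; ring
    have hne : (1:ℝ) - q^(k+1) ≠ 0 := ne_of_gt (one_sub_q_pow_pos hq0 hq1 k)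
    have hE2 : E q a (m+1) (k+1)
        = (1 - (q^(m+1))⁻¹) * (1 + a*q^(m+1)) * E q (a*q^2) m k / (1 - q^(k+1)) := by
      rw [eq_div_iff hne]; exact hE
    rw [W_diff, hexp, hE2, mul_inv a (q^2), mul_pow, mul_inv (q ^ (k * (k - 1))), inv_pow (q^2) k]
    have hq2 : (q^2)^k ≠ 0 := pow_ne_zero _ (pow_ne_zero _ hq)
    have hq3 : q^(k*(k-1)) ≠ 0 := pow_ne_zero _ hq
    rw [pow_succ, div_eq_mul_inv (q^n) a]
    field_simp
    have ha' : a * a⁻¹ = 1 := mul_inv_cancel₀ ha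
    linear_combination (E q (q ^ 2 * a) m k * a⁻¹ ^ k * W q n k *
      (-(q * q ^ m) + q * q ^ m * a - q ^ 2 * q ^ (m * 2) * a + 1)) * ha'
  rw [h2] at key
  linarith

end Stmt11

namespace Stmt11

def S (q b : ℝ) (m : ℕ) : ℝ :=
  ∑ k ∈ Finset.range (m+1), qPoch ((q^m)⁻¹) q k * qPoch b q k / qPoch q q k * q^k

lemma S_eval {q : ℝ} (hq0 : 0 < q) (hq1 : q < 1) (b : ℝ) (m : ℕ) : S q b m = b^m := by
  have hq : q ≠ 0 := ne_of_gt hq0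
  induction m with
  | zero => simp [S, qPoch_zero]
  | succ m ih =>
    set g : ℕ → ℝ := fun k => qPoch ((q^m)⁻¹) q k * qPoch b q k / qPoch q q k with hg
    have hterm : ∀ k ∈ Finset.range (m+1),
        qPoch ((q^(m+1))⁻¹) q (k+1) * qPoch b q (k+1) / qPoch q q (k+1) * q^(k+1)
          = g (k+1) - g k * (1 - b*q^k) := by
      intro k _
      have h1 : (q^(m+1))⁻¹ * q = (q^m)⁻¹ := by
        rw [pow_succ, mul_inv, mul_assoc, inv_mul_cancel₀ hq, mul_one]
      have hZ := qPochq_ne hq0 hq1 k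
      have hne : (1:ℝ) - q^(k+1) ≠ 0 := ne_of_gt (one_sub_q_pow_pos hq0 hq1 k)
      rw [hg]
      simp only []
      rw [qPoch_succ' ((q^(m+1))⁻¹), h1, qPoch_succ b, qPochq_succ,
        qPoch_succ ((q^m)⁻¹)]
      field_simp
      ring
    rw [S, Finset.sum_range_succ']
    rw [Finset.sum_congr rfl hterm, Finset.sum_sub_distrib]
    have h2 : ∑ k ∈ Finset.range (m+1), g (k+1)
        = ∑ k ∈ Finset.range (m+2), g k - g 0 := by
      rw [Finset.sum_range_succ' g (m+1)]; ring
    have hgm : g (m+1) = 0 := by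
      rw [hg]
      simp only []
      rw [qPoch_self_zero hq m (m+1) (by omega)]
      ring
    have hg0 : g 0 = 1 := by simp [hg, qPoch_zero]
    have h3 : ∑ k ∈ Finset.range (m+1), g k
          - ∑ k ∈ Finset.range (m+1), (g k * (1 - b*q^k))
        = b * S q b m := by
      rw [S, Finset.mul_sum, ← Finset.sum_sub_distrib]
      apply Finset.sum_congr rfl
      intro k _
      rw [hg]; ring
    rw [h2, Finset.sum_range_succ, hgm]
    have hf0 : qPoch ((q^(m+1))⁻¹) q 0 * qPoch b q 0 / qPoch q q 0 * q^0 = 1 := by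
      simp [qPoch_zero]
    rw [hf0]
    linear_combination h3 + b * ih - hg0

end Stmt11

namespace Stmt11

lemma Fdual_m0 (q a : ℝ) (n : ℕ) : Fdual q a n 0 = 1 := by
  simp [Fdual, qPoch_zero]

lemma ddual_m0 (q a : ℝ) (n : ℕ) : ddual q a n 0 = 1 := by
  simp [ddual, qPoch_zero]

lemma ddual_n0 (q a : ℝ) (m : ℕ) : ddual q a 0 m = 1 := by
  simp [ddual, qPoch_zero]

lemma Fdual_n0 (q a : ℝ) (m : ℕ) : Fdual q a 0 m = S q (-(a*q^m)) m := by
  rw [Fdual, S]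
  apply Finset.sum_congr rfl
  intro k _
  norm_num

end Stmt11


open Stmt11 in
/-- The transformation formula `F_n(q^{-m}; a | q) = (-a)^m q^{m²} d_n(μ(m); a; q)`. -/
theorem statement11 (q a : ℝ) (hq0 : 0 < q) (hq1 : q < 1) (ha : 0 < a) (m n : ℕ) :
    Fdual q a n m = (-a) ^ m * q ^ (m ^ 2) * ddual q a n m := by
  induction n generalizing a ha m with
  | zero =>
    rw [ddual_n0, mul_one, Fdual_n0, S_eval hq0 hq1]
    rw [show -(a*q^m) = -a * q^m by ring, mul_pow, ← pow_mul]
    congr 2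
    exact (pow_two m).symm
  | succ n ih =>
    rcases m with _ | m
    · rw [Fdual_m0, ddual_m0]; norm_num
    · rw [FrecA hq0 hq1 a n m, ih a ha (m+1), ih (a*q^2) (by positivity) m,
        ddual_eq_D hq0 a (n+1) (m+1), ddual_eq_D hq0 a n (m+1),
        ddual_eq_D hq0 (a*q^2) n m, DrecB hq0 hq1 (ne_of_gt ha) n m]
      rw [show (m+1)^2 = m^2 + (2*m+1) from by ring,
        show (-(a*q^2) : ℝ)^m = (-a)^m * q^(2*m) from by
          rw [show (-(a*q^2) : ℝ) = -a * q^2 by ring, mul_pow, ← pow_mul]]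
      field_simp
      ring
end
end

section
/- For each n ∈ ℕ there exists a polynomial p_n ∈ ℝ[X] of degree exactly n such that p_n(q^{−m} − a q^m) = d_n(μ(m);a;q) for all m ∈ ℕ; that is, d_n(μ(m);a;q) is a polynomial of degree n in the variable μ(m) = q^{−m} − a q^m. -/
noncomputable section
open scoped ENNReal
open Filter

def Pfac (q a : ℝ) (k : ℕ) : Polynomial ℝ :=
  ∏ j ∈ Finset.range k, (Polynomial.C (-(q ^ j)) * Polynomial.X + Polynomial.C (1 - a * q ^ (2 * j)))

lemma Pfac_degree (q a : ℝ) (hq0 : q ≠ 0) (k : ℕ) : (Pfac q a k).degree = k := by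
  rw [Pfac, Polynomial.degree_prod]
  have : ∀ j ∈ Finset.range k,
      (Polynomial.C (-(q ^ j)) * Polynomial.X + Polynomial.C (1 - a * q ^ (2 * j))).degree = 1 := by
    intro j _
    exact Polynomial.degree_linear (by simp [pow_ne_zero, hq0])
  rw [Finset.sum_congr rfl this]
  simp

lemma Pfac_eval (q a : ℝ) (hq0 : q ≠ 0) (k m : ℕ) :
    (Pfac q a k).eval ((q ^ m)⁻¹ - a * q ^ m)
      = qPoch ((q ^ m)⁻¹) q k * qPoch (-(a * q ^ m)) q k := by
  rw [Pfac, Polynomial.eval_prod, qPoch, qPoch, ← Finset.prod_mul_distrib]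
  refine Finset.prod_congr rfl fun j _ => ?_
  have hm : (q : ℝ) ^ m ≠ 0 := pow_ne_zero _ hq0
  simp only [Polynomial.eval_add, Polynomial.eval_mul, Polynomial.eval_C, Polynomial.eval_X]
  field_simp
  ring

/-- `d_n(μ(m); a; q)` is a polynomial of degree exactly `n` in the variable
`μ(m) = q^{-m} - a q^m`. -/
theorem statement12 (q a : ℝ) (hq0 : 0 < q) (hq1 : q < 1) (ha : 0 < a) (n : ℕ) :
    ∃ p : Polynomial ℝ, p.degree = n ∧
      ∀ m : ℕ, p.eval ((q ^ m)⁻¹ - a * q ^ m) = ddual q a n m := by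
  have hqne : q ≠ 0 := ne_of_gt hq0
  set c : ℕ → ℝ := fun k =>
    qPoch ((q ^ n)⁻¹) q k / qPoch q q k * (q ^ (k * (k - 1)))⁻¹ * (-(q ^ n / a)) ^ k with hc
  refine ⟨∑ k ∈ Finset.range (n + 1), Polynomial.C (c k) * Pfac q a k, ?_, ?_⟩
  · -- degree
    rw [Finset.sum_range_succ]
    have hcn : c n ≠ 0 := by
      have h1 : qPoch ((q ^ n)⁻¹) q n ≠ 0 := by
        rw [qPoch]
        refine Finset.prod_ne_zero_iff.mpr fun j hj => ?_
        have hjn : j < n := Finset.mem_range.mp hj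
        have : q ^ n < q ^ j := pow_lt_pow_right_of_lt_one₀ hq0 hq1 hjn
        have hgt : 1 < (q ^ n)⁻¹ * q ^ j := by
          rw [inv_mul_eq_div, lt_div_iff₀ (pow_pos hq0 n)]
          simpa using this
        linarith
      have h2 : qPoch q q n ≠ 0 := by
        rw [qPoch]
        refine Finset.prod_ne_zero_iff.mpr fun j hj => ?_
        have : q * q ^ j < 1 := by
          have h1 : q ^ (j + 1) < 1 := pow_lt_one₀ (le_of_lt hq0) hq1 (Nat.succ_ne_zero j)
          simpa [pow_succ, mul_comm] using h1
        linarith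
      have h3 : ((q : ℝ) ^ (n * (n - 1)))⁻¹ ≠ 0 := by positivity
      have h4 : (-(q ^ n / a)) ^ n ≠ 0 := by
        apply pow_ne_zero
        simp [div_eq_zero_iff, pow_eq_zero_iff, hqne, ne_of_gt ha]
      simp only [hc]
      exact mul_ne_zero (mul_ne_zero (div_ne_zero h1 h2) h3) h4
    have hlast : (Polynomial.C (c n) * Pfac q a n).degree = n := by
      rw [Polynomial.degree_C_mul hcn, Pfac_degree q a hqne]
    have hrest : (∑ k ∈ Finset.range n, Polynomial.C (c k) * Pfac q a k).degree < n := by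
      refine lt_of_le_of_lt (Polynomial.degree_sum_le _ _) ?_
      rw [Finset.sup_lt_iff (by exact_mod_cast WithBot.bot_lt_coe n)]
      intro k hk
      have hkn : k < n := Finset.mem_range.mp hk
      refine lt_of_le_of_lt (Polynomial.degree_mul_le _ _) ?_
      have h0 : (Polynomial.C (c k)).degree ≤ 0 := Polynomial.degree_C_le
      calc (Polynomial.C (c k)).degree + (Pfac q a k).degree
          ≤ 0 + (k : WithBot ℕ) := by
            rw [Pfac_degree q a hqne]; exact add_le_add_left h0 _
        _ = (k : WithBot ℕ) := zero_add _
        _ < n := by exact_mod_cast hkn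
    rw [← hlast]
    exact Polynomial.degree_add_eq_right_of_degree_lt (by rwa [hlast])
  · intro m
    rw [Polynomial.eval_finset_sum]
    simp only [Polynomial.eval_mul, Polynomial.eval_C, Pfac_eval q a hqne]
    rw [ddual]
    rw [← Finset.sum_subset (Finset.range_subset_range.mpr (by omega : min m n + 1 ≤ n + 1))]
    · refine Finset.sum_congr rfl fun k _ => ?_
      simp only [hc]; ring
    · intro k hk hk'
      have hkn : k < n + 1 := Finset.mem_range.mp hk
      have hkm : m < k := by
        simp only [Finset.mem_range, not_lt] at hk'
        omega
      have : qPoch ((q ^ m)⁻¹) q k = 0 := by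
        rw [qPoch]
        refine Finset.prod_eq_zero (Finset.mem_range.mpr hkm) ?_
        rw [inv_mul_cancel₀ (pow_ne_zero _ hqne)]
        ring
      simp [this]
end
end

section
/- The dual alternative q-Charlier polynomials satisfy the three-term recurrence relation: for all m ∈ ℕ and n ∈ ℕ, (q^{−m} − a q^{m}) d_n(μ(m);a;q) = −a · d_{n+1}(μ(m);a;q) + q^{−n} d_n(μ(m);a;q) − q^{−n}(1 − qⁿ) d_{n−1}(μ(m);a;q), with the convention d_{−1} := 0. -/
noncomputable section
open scoped ENNReal
open Filter

namespace S14Aux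

/-- `gP q n k = ∏_{j<k} (qⁿ - qʲ)`, a renormalized `(q^{-n};q)_k`. -/
def gP (q : ℝ) (n k : ℕ) : ℝ := ∏ j ∈ Finset.range k, (q ^ n - q ^ j)

/-- The `n`-free part of the summand of `ddual`. -/
def cC (q a : ℝ) (m k : ℕ) : ℝ :=
  qPoch ((q ^ m)⁻¹) q k * qPoch (-(a * q ^ m)) q k / qPoch q q k *
    (q ^ (k * (k - 1)))⁻¹ * (-(1 / a)) ^ k

lemma qPoch_succ (x q : ℝ) (k : ℕ) :
    qPoch x q (k + 1) = qPoch x q k * (1 - x * q ^ k) :=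
  Finset.prod_range_succ _ _

lemma qPoch_q_ne_zero {q : ℝ} (hq0 : 0 < q) (hq1 : q < 1) (k : ℕ) :
    qPoch q q k ≠ 0 := by
  refine Finset.prod_ne_zero_iff.2 fun j _ => ?_
  have h1 : q * q ^ j = q ^ (j + 1) := by ring
  have h2 : q ^ (j + 1) < 1 := pow_lt_one₀ hq0.le hq1 (Nat.succ_ne_zero j)
  rw [h1]; intro h; linarith [sub_eq_zero.mp h]

lemma qPoch_inv_zero {q : ℝ} (hq : q ≠ 0) {n k : ℕ} (h : n < k) :
    qPoch ((q ^ n)⁻¹) q k = 0 := by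
  unfold qPoch
  refine Finset.prod_eq_zero (Finset.mem_range.2 h) ?_
  have : ((q : ℝ) ^ n)⁻¹ * q ^ n = 1 := inv_mul_cancel₀ (pow_ne_zero _ hq)
  rw [this]; ring

lemma gP_succ (q : ℝ) (n k : ℕ) : gP q n (k + 1) = gP q n k * (q ^ n - q ^ k) :=
  Finset.prod_range_succ _ _

lemma gP_zero (q : ℝ) (n : ℕ) : gP q n 0 = 1 := rfl

lemma gP_vanish (q : ℝ) {n k : ℕ} (h : n < k) : gP q n k = 0 :=
  Finset.prod_eq_zero (Finset.mem_range.2 h) (sub_self _)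

lemma gP_eq {q : ℝ} (hq : q ≠ 0) (n k : ℕ) :
    qPoch ((q ^ n)⁻¹) q k * (q ^ n) ^ k = gP q n k := by
  have hqn : (q : ℝ) ^ n ≠ 0 := pow_ne_zero _ hq
  unfold qPoch gP
  rw [show ((q ^ n) ^ k : ℝ) = ∏ _j ∈ Finset.range k, q ^ n by
    rw [Finset.prod_const, Finset.card_range], ← Finset.prod_mul_distrib]
  refine Finset.prod_congr rfl fun j _ => ?_
  field_simp

lemma gP_shift (q : ℝ) (n k : ℕ) :
    gP q (n + 1) (k + 1) = (q ^ (n + 1) - 1) * q ^ k * gP q n k := by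
  unfold gP
  rw [Finset.prod_range_succ']
  have h : ∀ j ∈ Finset.range k, q ^ (n + 1) - q ^ (j + 1) = q * (q ^ n - q ^ j) :=
    fun j _ => by ring
  rw [Finset.prod_congr rfl h, Finset.prod_mul_distrib, Finset.prod_const,
    Finset.card_range]
  simp only [pow_zero]
  ring

lemma cC_zero (q a : ℝ) (m : ℕ) : cC q a m 0 = 1 := by
  simp [cC, qPoch]

lemma cC_vanish {q : ℝ} (a : ℝ) (hq : q ≠ 0) {m k : ℕ} (h : m < k) :
    cC q a m k = 0 := by
  unfold cC
  rw [qPoch_inv_zero hq h]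
  ring

/-- The contiguous relation for the `n`-free coefficients. -/
lemma cC_rec {q a : ℝ} (hq0 : 0 < q) (hq1 : q < 1) (ha : 0 < a) (m k : ℕ) :
    a * q ^ k * (1 - q ^ (k + 1)) * cC q a m (k + 1) =
      ((q ^ m)⁻¹ - a * q ^ m - (q ^ k)⁻¹ + a * q ^ k) * cC q a m k := by
  have hq : q ≠ 0 := hq0.ne'
  have ha' : a ≠ 0 := ha.ne'
  have hP : qPoch q q k ≠ 0 := qPoch_q_ne_zero hq0 hq1 k
  have hpow : q ^ (k + 1) < 1 := pow_lt_one₀ hq0.le hq1 (by omega)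
  have hk1 : (1 : ℝ) - q * q ^ k ≠ 0 := by
    have h2 : q * q ^ k = q ^ (k + 1) := by ring
    rw [h2]; intro h; have := sub_eq_zero.mp h; linarith
  have hexp : (k + 1) * ((k + 1) - 1) = k * (k - 1) + 2 * k := by
    cases k with
    | zero => rfl
    | succ j => simp [Nat.succ_sub_one]; ring
  unfold cC
  rw [qPoch_succ, qPoch_succ, qPoch_succ, hexp, pow_add q (k * (k - 1)) (2 * k),
    pow_succ (-(1 / a))]
  have hqk : (q : ℝ) ^ k ≠ 0 := pow_ne_zero _ hq
  have hqm : (q : ℝ) ^ m ≠ 0 := pow_ne_zero _ hq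
  have hqkk : (q : ℝ) ^ (k * (k - 1)) ≠ 0 := pow_ne_zero _ hq
  have hk1' : (1 : ℝ) - q ^ k * q ≠ 0 := by rw [mul_comm]; exact hk1
  field_simp [hP, hk1, hk1', hqk, hqm, hqkk, ha']
  ring

/-- `ddual` as a sum with an `n`-free cut-off. -/
lemma ddual_eq_sum {q a : ℝ} (hq0 : 0 < q) (hq1 : q < 1) (ha : 0 < a) (m n : ℕ) :
    ddual q a n m = ∑ k ∈ Finset.range (m + 2), cC q a m k * gP q n k := by
  have hq : q ≠ 0 := hq0.ne'
  have step : ∀ k, qPoch ((q ^ m)⁻¹) q k * qPoch (-(a * q ^ m)) q k *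
      qPoch ((q ^ n)⁻¹) q k / qPoch q q k * (q ^ (k * (k - 1)))⁻¹ * (-(q ^ n / a)) ^ k
      = cC q a m k * gP q n k := by
    intro k
    rw [← gP_eq hq n k]
    unfold cC
    rw [show (-(q ^ n / a) : ℝ) = q ^ n * (-(1 / a)) by ring, mul_pow]
    ring
  unfold ddual
  rw [Finset.sum_congr rfl fun k _ => step k]
  refine Finset.sum_subset (Finset.range_subset_range.2 (by omega)) ?_
  intro k _ hk
  rw [Finset.mem_range, not_lt] at hk
  rcases le_or_gt (m + 1) k with h | h
  · rw [cC_vanish a hq (by omega), zero_mul]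
  · have hn : n < k := by omega
    rw [gP_vanish q hn, mul_zero]

/-- The core three-term identity at the level of the cut-off sums. -/
lemma core {q a : ℝ} (hq0 : 0 < q) (hq1 : q < 1) (ha : 0 < a) (m n : ℕ) :
    ((q ^ m)⁻¹ - a * q ^ m) * ∑ k ∈ Finset.range (m + 2), cC q a m k * gP q n k =
      -a * (∑ k ∈ Finset.range (m + 2), cC q a m k * gP q (n + 1) k) +
        (q ^ n)⁻¹ * ∑ k ∈ Finset.range (m + 2), cC q a m k * gP q n k +
        ∑ k ∈ Finset.range (m + 2), cC q a m k * gP q n k * ((q ^ k)⁻¹ - (q ^ n)⁻¹) := by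
  have hq : q ≠ 0 := hq0.ne'
  have ha' : a ≠ 0 := ha.ne'
  set μ : ℝ := (q ^ m)⁻¹ - a * q ^ m with hμ
  have e1 : ∀ k, a * (cC q a m (k + 1) * gP q (n + 1) (k + 1)) =
      a * (q ^ (k + 1) * (cC q a m (k + 1) * gP q n (k + 1))) -
        (μ - (q ^ k)⁻¹ + a * q ^ k) * (cC q a m k * gP q n k) := by
    intro k
    have h1 : gP q (n + 1) (k + 1) = (q ^ (n + 1) - 1) * q ^ k * gP q n k := gP_shift q n k
    have h2 := cC_rec hq0 hq1 ha m k
    have h3 : gP q n (k + 1) = gP q n k * (q ^ n - q ^ k) := gP_succ q n k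
    rw [h1, h3, hμ]
    linear_combination (-(gP q n k)) * h2
  have key : a * (∑ k ∈ Finset.range (m + 2), cC q a m k * gP q (n + 1) k)
      = ∑ k ∈ Finset.range (m + 2), ((q ^ k)⁻¹ - μ) * (cC q a m k * gP q n k) := by
    rw [Finset.sum_range_succ' (fun k => cC q a m k * gP q (n + 1) k) (m + 1)]
    simp only [cC_zero, gP_zero, one_mul, mul_one]
    rw [mul_add, mul_one, Finset.mul_sum]
    rw [Finset.sum_congr rfl fun k _ => e1 k]
    rw [Finset.sum_sub_distrib]
    have hA : (∑ k ∈ Finset.range (m + 1),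
        a * (q ^ (k + 1) * (cC q a m (k + 1) * gP q n (k + 1))))
        = (∑ k ∈ Finset.range (m + 2), a * (q ^ k * (cC q a m k * gP q n k))) - a := by
      rw [Finset.sum_range_succ' (fun k => a * (q ^ k * (cC q a m k * gP q n k))) (m + 1)]
      simp [cC_zero, gP_zero]
    have hB : (∑ k ∈ Finset.range (m + 1),
        (μ - (q ^ k)⁻¹ + a * q ^ k) * (cC q a m k * gP q n k))
        = ∑ k ∈ Finset.range (m + 2),
            (μ - (q ^ k)⁻¹ + a * q ^ k) * (cC q a m k * gP q n k) := by
      rw [Finset.sum_range_succ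
        (fun k => (μ - (q ^ k)⁻¹ + a * q ^ k) * (cC q a m k * gP q n k)) (m + 1)]
      rw [cC_vanish a hq (by omega : m < m + 1)]
      ring
    rw [hA, hB]
    have hmerge : (∑ k ∈ Finset.range (m + 2), a * (q ^ k * (cC q a m k * gP q n k))) -
        ∑ k ∈ Finset.range (m + 2), (μ - (q ^ k)⁻¹ + a * q ^ k) * (cC q a m k * gP q n k)
        = ∑ k ∈ Finset.range (m + 2), ((q ^ k)⁻¹ - μ) * (cC q a m k * gP q n k) := by
      rw [← Finset.sum_sub_distrib]
      exact Finset.sum_congr rfl fun k _ => by ring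
    linarith [hmerge]
  have hfin : ((q ^ m)⁻¹ - a * q ^ m) * ∑ k ∈ Finset.range (m + 2), cC q a m k * gP q n k
      = ∑ k ∈ Finset.range (m + 2), μ * (cC q a m k * gP q n k) := by
    rw [Finset.mul_sum]
  rw [hfin, neg_mul, key, Finset.mul_sum, ← Finset.sum_neg_distrib,
    ← Finset.sum_add_distrib, ← Finset.sum_add_distrib]
  exact Finset.sum_congr rfl fun k _ => by ring

end S14Aux

open S14Aux in
/-- The three-term recurrence relation for the dual alternative `q`-Charlier polynomials:
`(q^{-m} - a q^m) d_n(μ(m)) = -a d_{n+1}(μ(m)) + q^{-n} d_n(μ(m)) - q^{-n}(1 - qⁿ) d_{n-1}(μ(m))`,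
with the convention `d_{-1} := 0`. -/
theorem statement14 (q a : ℝ) (hq0 : 0 < q) (hq1 : q < 1) (ha : 0 < a) (m n : ℕ) :
    ((q ^ m)⁻¹ - a * q ^ m) * ddual q a n m =
      -a * ddual q a (n + 1) m + (q ^ n)⁻¹ * ddual q a n m -
        (q ^ n)⁻¹ * (1 - q ^ n) * (if n = 0 then 0 else ddual q a (n - 1) m) := by
  have hq : q ≠ 0 := hq0.ne'
  rw [ddual_eq_sum hq0 hq1 ha m n, ddual_eq_sum hq0 hq1 ha m (n + 1)]
  cases n with
  | zero =>
    simp only [if_pos rfl, mul_zero, sub_zero]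
    rw [core hq0 hq1 ha m 0]
    have hz : ∑ k ∈ Finset.range (m + 2),
        cC q a m k * gP q 0 k * ((q ^ k)⁻¹ - ((q : ℝ) ^ 0)⁻¹) = 0 := by
      refine Finset.sum_eq_zero fun k _ => ?_
      cases k with
      | zero => simp
      | succ i => rw [gP_vanish q (Nat.succ_pos i)]; ring
    rw [hz]; ring
  | succ j =>
    rw [if_neg (Nat.succ_ne_zero j), Nat.add_sub_cancel, ddual_eq_sum hq0 hq1 ha m j]
    rw [core hq0 hq1 ha m (j + 1)]
    have hterm : ∀ k, gP q (j + 1) k * ((q ^ k)⁻¹ - (q ^ (j + 1))⁻¹) =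
        -((q ^ (j + 1))⁻¹ * (1 - q ^ (j + 1)) * gP q j k) := by
      intro k
      have h1 : gP q (j + 1) k * (q ^ (j + 1) - q ^ k) =
          (q ^ (j + 1) - 1) * q ^ k * gP q j k := by
        rw [← gP_succ, gP_shift]
      have hqk : (q : ℝ) ^ k ≠ 0 := pow_ne_zero _ hq
      have hqj : (q : ℝ) ^ (j + 1) ≠ 0 := pow_ne_zero _ hq
      field_simp
      linear_combination h1
    have hsum : ∑ k ∈ Finset.range (m + 2),
        cC q a m k * gP q (j + 1) k * ((q ^ k)⁻¹ - (q ^ (j + 1))⁻¹) =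
        -((q ^ (j + 1))⁻¹ * (1 - q ^ (j + 1)) *
          ∑ k ∈ Finset.range (m + 2), cC q a m k * gP q j k) := by
      rw [Finset.mul_sum, ← Finset.sum_neg_distrib]
      refine Finset.sum_congr rfl fun k _ => ?_
      linear_combination cC q a m k * hterm k
    rw [hsum]; ring
end
end
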